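/- For integers i₁ < i₂, the distribution spanned by Ê_(i₁) and Ê_(i₂) is involutive (i.e., [Ê_(i₁), Ê_(i₂)] lies pointwise in the span of Ê_(i₁), Ê_(i₂)) if and only if i₁ = 1 or i₂ = 1. -/

import Mathlib

/-!
The vector fields satisfy `[Ê_(l), Ê_(m)] = (m - l) Ê_(l+m-1)` wherever `u^1, …, u^n` are nonzero,
so involutivity asks whether `Ê_(l+m-1)` lies pointwise in the span of `Ê_(l)` and `Ê_(m)`.
For `l = 1` or `m = 1` it is one of them. Otherwise, at a point with `u^j = u^(n+1) = 1`, the `j`-th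
and last components force the coefficients `1 - l` and `m - 1`, and another component `y = u^k`
must then satisfy `(m - l) y^(l+m-1) = (1 - l) y^l + (m - 1) y^m`, a nontrivial Laurent
polynomial identity that fails for some `y > 1`.
-/

open scoped BigOperators

/-- Partial derivative of a scalar function on `ℝ^m` in the `k`-th coordinate direction. -/
noncomputable def pderiv' {m : ℕ} (f : (Fin m → ℝ) → ℝ) (k : Fin m) (u : Fin m → ℝ) : ℝ :=
  fderiv ℝ f u (Pi.single k 1)

/-- Lie bracket of vector fields on `ℝ^m`: `[X,Y]^i = X^k ∂_k Y^i - Y^k ∂_k X^i`. -/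
noncomputable def lieB {m : ℕ} (X Y : (Fin m → ℝ) → (Fin m → ℝ)) (u : Fin m → ℝ) :
    Fin m → ℝ :=
  fun i => ∑ k, (X u k * pderiv' (fun v => Y v i) k u - Y u k * pderiv' (fun v => X v i) k u)

/-- The vector field `Ê_(l) = Σ_{i=1}^n (u^i)^l ∂_i - l (u^j)^(l-1) u^(n+1) ∂_(n+1)` on ℝ^(n+1). -/
noncomputable def Ehat (n : ℕ) (j : Fin n) (l : ℤ) (u : Fin (n+1) → ℝ) : Fin (n+1) → ℝ :=
  fun i => if h : (i : ℕ) < n then (u i) ^ l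
    else -(l : ℝ) * (u (Fin.castSucc j)) ^ (l - 1) * u (Fin.last n)

/-- The open set where `u^1, …, u^n` are pairwise distinct and nonzero and `u^(n+1) ≠ 0`. -/
def OmegaSet (n : ℕ) (u : Fin (n+1) → ℝ) : Prop :=
  (∀ a b : Fin n, a ≠ b → u (Fin.castSucc a) ≠ u (Fin.castSucc b)) ∧
  (∀ a : Fin n, u (Fin.castSucc a) ≠ 0) ∧ u (Fin.last n) ≠ 0

lemma sum_mul_pderiv' {m : ℕ} (f : (Fin m → ℝ) → ℝ) (u w : Fin m → ℝ) :
    ∑ k, w k * pderiv' f k u = fderiv ℝ f u w := by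
  conv_rhs => rw [pi_eq_sum_univ' w, map_sum]
  simp only [pderiv', map_smul, smul_eq_mul]

lemma lieB_apply {m : ℕ} (X Y : (Fin m → ℝ) → (Fin m → ℝ)) (u : Fin m → ℝ) (i : Fin m) :
    lieB X Y u i = fderiv ℝ (fun v => Y v i) u (X u) - fderiv ℝ (fun v => X v i) u (Y u) := by
  simp only [lieB, Finset.sum_sub_distrib, sum_mul_pderiv']

lemma hasFDerivAt_apply_zpow {N : ℕ} (p : ℤ) (a : Fin N) {u : Fin N → ℝ} (hu : u a ≠ 0) :
    HasFDerivAt (fun v : Fin N → ℝ => v a ^ p)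
      (((p : ℝ) * u a ^ (p - 1)) • ContinuousLinearMap.proj (R := ℝ) a) u :=
  (hasDerivAt_zpow p (u a) (Or.inl hu)).comp_hasFDerivAt (h₂ := fun x : ℝ => x ^ p) u
    (hasFDerivAt_apply (𝕜 := ℝ) a u)

lemma fderiv_apply_zpow {N : ℕ} (p : ℤ) (a : Fin N) {u : Fin N → ℝ} (hu : u a ≠ 0)
    (w : Fin N → ℝ) :
    fderiv ℝ (fun v : Fin N → ℝ => v a ^ p) u w = p * u a ^ (p - 1) * w a := by
  simp [(hasFDerivAt_apply_zpow p a hu).fderiv]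

lemma fderiv_const_mul_apply_zpow_mul_apply {N : ℕ} (c : ℝ) (p : ℤ) (a b : Fin N)
    {u : Fin N → ℝ} (hu : u a ≠ 0) (w : Fin N → ℝ) :
    fderiv ℝ (fun v : Fin N → ℝ => c * v a ^ p * v b) u w
      = c * (p * u a ^ (p - 1) * w a * u b + u a ^ p * w b) := by
  have hf : HasFDerivAt (fun v : Fin N → ℝ => c * v a ^ p * v b) _ u :=
    ((hasFDerivAt_apply_zpow p a hu).const_mul c).mul (hasFDerivAt_apply b u)
  rw [hf.fderiv]
  simp only [add_apply, smul_apply, ContinuousLinearMap.proj_apply, smul_eq_mul]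
  ring

section Ehat

variable (n : ℕ) (j : Fin n) (l : ℤ) (u : Fin (n+1) → ℝ)

@[simp] lemma Ehat_castSucc (a : Fin n) : Ehat n j l u a.castSucc = u a.castSucc ^ l := by
  simp [Ehat]

@[simp] lemma Ehat_last :
    Ehat n j l u (Fin.last n) = -l * u j.castSucc ^ (l - 1) * u (Fin.last n) := by
  simp [Ehat]

end Ehat

theorem lieB_Ehat (n : ℕ) (j : Fin n) (l m : ℤ) {u : Fin (n+1) → ℝ}
    (hu : ∀ a : Fin n, u a.castSucc ≠ 0) :
    lieB (Ehat n j l) (Ehat n j m) u = ((m - l : ℤ) : ℝ) • Ehat n j (l + m - 1) u := by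
  funext i
  rw [lieB_apply, Pi.smul_apply, smul_eq_mul]
  induction i using Fin.lastCases with
  | last =>
    simp only [Ehat_last]
    rw [fderiv_const_mul_apply_zpow_mul_apply _ _ _ _ (hu j),
      fderiv_const_mul_apply_zpow_mul_apply _ _ _ _ (hu j)]
    simp only [Ehat_last, Ehat_castSucc, zpow_sub_one₀ (hu j), zpow_add₀ (hu j)]
    push_cast
    ring
  | cast a =>
    simp only [Ehat_castSucc]
    rw [fderiv_apply_zpow _ _ (hu a), fderiv_apply_zpow _ _ (hu a)]
    simp only [Ehat_castSucc, zpow_sub_one₀ (hu a), zpow_add₀ (hu a)]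
    push_cast
    ring

lemma zpow_identity_of_smul_Ehat_eq {n : ℕ} (j : Fin n) {l m : ℤ} (hlm : l < m)
    {u : Fin (n+1) → ℝ} (hj : u j.castSucc = 1) (hlast : u (Fin.last n) = 1) {a b : ℝ}
    (h : ((m - l : ℤ) : ℝ) • Ehat n j (l + m - 1) u
      = fun i => a * Ehat n j l u i + b * Ehat n j m u i) (k : Fin n) :
    ((m : ℝ) - l) * u k.castSucc ^ (l + m - 1)
      = (1 - l) * u k.castSucc ^ l + (m - 1) * u k.castSucc ^ m := by
  have hj' := congrFun h j.castSucc
  have hlast' := congrFun h (Fin.last n)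
  have hk := congrFun h k.castSucc
  simp only [Pi.smul_apply, smul_eq_mul, Ehat_castSucc, Ehat_last, hj, hlast, one_zpow]
    at hj' hlast' hk
  push_cast at hj' hlast' hk
  have hml : (m : ℝ) - l ≠ 0 := sub_ne_zero.mpr (by exact_mod_cast hlm.ne')
  have ha : a = 1 - l := mul_right_cancel₀ hml (by linear_combination (-(m : ℝ)) * hj' - hlast')
  have hb : b = m - 1 := mul_right_cancel₀ hml (by linear_combination (l : ℝ) * hj' + hlast')
  rw [hk, ha, hb]

lemma exists_omegaSet {n : ℕ} (hn : 2 ≤ n) (j : Fin n) {y : ℝ} (hy : 1 < y) :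
    ∃ u : Fin (n+1) → ℝ, OmegaSet n u ∧ u j.castSucc = 1 ∧ u (Fin.last n) = 1 ∧
      ∃ k : Fin n, u k.castSucc = y := by
  let σ := Equiv.swap j ⟨0, by omega⟩
  let v : Fin n → ℝ := fun a => y ^ (σ a : ℕ)
  have hv : Function.Injective v :=
    (pow_right_injective₀ (by linarith) hy.ne').comp (Fin.val_injective.comp σ.injective)
  refine ⟨Fin.snoc v 1, ⟨fun a b hab => ?_, fun a => ?_, ?_⟩, ?_, ?_, σ ⟨1, by omega⟩, ?_⟩
  all_goals simp only [Fin.snoc_castSucc, Fin.snoc_last]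
  · exact hv.ne hab
  · positivity
  · exact one_ne_zero
  · simp [v, σ]
  · simp [v, σ]

open Polynomial in
/-- Multiplying by `y ^ (-N)` gives a polynomial, nonzero because its coefficient at `q - N` is `b`,
so it has only finitely many roots. -/
lemma exists_one_lt_zpow_combination_ne_zero {a b c : ℝ} {p q r : ℤ} (hqp : q ≠ p)
    (hqr : q ≠ r) (hb : b ≠ 0) :
    ∃ y : ℝ, 1 < y ∧ a * y ^ p + b * y ^ q + c * y ^ r ≠ 0 := by
  set N := min p (min q r)
  let P : ℝ[X] := C a * X ^ (p - N).toNat + C b * X ^ (q - N).toNat + C c * X ^ (r - N).toNat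
  have hP : P ≠ 0 := by
    intro hP
    have hcoeff := congrArg (coeff · (q - N).toNat) hP
    have hqp' : (q - N).toNat ≠ (p - N).toNat := by omega
    have hqr' : (q - N).toNat ≠ (r - N).toNat := by omega
    simp [P, coeff_X_pow, hqp', hqr', hb] at hcoeff
  obtain ⟨y, hy, hPy⟩ := ((Set.Ioi_infinite (1 : ℝ)).sdiff (finite_setOfPred_isRoot hP)).nonempty
  have hy0 : y ≠ 0 := (zero_lt_one.trans hy).ne'
  have hshift (e : ℤ) (he : N ≤ e) : y ^ e = y ^ N * y ^ (e - N).toNat := by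
    rw [← zpow_natCast, Int.toNat_of_nonneg (by omega), ← zpow_add₀ hy0, add_sub_cancel]
  refine ⟨y, hy, ?_⟩
  rw [hshift p (by omega), hshift q (by omega), hshift r (by omega)]
  have hPy : P.eval y ≠ 0 := hPy
  simp only [P, eval_add, eval_mul, eval_C, eval_pow, eval_X] at hPy
  convert mul_ne_zero (zpow_ne_zero N hy0) hPy using 1
  ring

/-- for integers `i₁ < i₂`, the rank-2 distribution spanned by `Ê_(i₁), Ê_(i₂)`
is involutive (the bracket lies pointwise in the span) iff `i₁ = 1` or `i₂ = 1`. -/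
theorem stmt3 (n : ℕ) (hn : 2 ≤ n) (j : Fin n) (i₁ i₂ : ℤ) (h12 : i₁ < i₂) :
    (∀ u : Fin (n+1) → ℝ, OmegaSet n u →
      ∃ a b : ℝ, lieB (Ehat n j i₁) (Ehat n j i₂) u
        = fun i => a * Ehat n j i₁ u i + b * Ehat n j i₂ u i)
      ↔ (i₁ = 1 ∨ i₂ = 1) := by
  constructor
  · intro hinv
    by_contra! ⟨h₁, h₂⟩
    obtain ⟨y, hy, hfy⟩ := exists_one_lt_zpow_combination_ne_zero (a := 1 - i₁) (b := i₂ - 1)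
      (c := -((i₂ : ℝ) - i₁)) h12.ne' (by omega : i₂ ≠ i₁ + i₂ - 1)
      (sub_ne_zero.mpr (by exact_mod_cast h₂))
    obtain ⟨u, hu, hj, hlast, k, rfl⟩ := exists_omegaSet hn j hy
    obtain ⟨a, b, hab⟩ := hinv u hu
    rw [lieB_Ehat n j i₁ i₂ hu.2.1] at hab
    have hk := zpow_identity_of_smul_Ehat_eq j h12 hj hlast hab k
    exact hfy (by linear_combination -hk)
  · rintro (rfl | rfl) u hu
    · refine ⟨0, ((i₂ - 1 : ℤ) : ℝ), ?_⟩
      rw [lieB_Ehat n j 1 i₂ hu.2.1, add_sub_cancel_left]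
      ext i
      simp
    · refine ⟨((1 - i₁ : ℤ) : ℝ), 0, ?_⟩
      rw [lieB_Ehat n j i₁ 1 hu.2.1, add_sub_cancel_right]
      ext i
      simp
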